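/- Let K be a field, X ∈ K[[z]], and A(t) = Σ_{j≤m} A_j t^j ∈ K[[z]][t] a polynomial with power series coefficients. Let A'(t) = Σ_{j≤m} j·A_j t^{j-1} be its formal derivative. Define δ_n(A,X) := Σ_{j≤m} (A_j · X^{[j]})_n, where (X^{[j]})_n := Σ_{k_1+…+k_j=n, all k_i ≤ n/2} X_{k_1}···X_{k_j}; define ε_n(A,X) := Σ_{j≤m} Σ_{k+p+q=n, q<p≤n/2} j·(A_j)_k·(X^{j-1})_q·X_p; and for λ < n/2 define γ_{n,λ}(A,X) := Σ_{λ ≤ ℓ < n/2} (A'(X))_ℓ · X_{n-ℓ}. Then for all n and all λ < n/2: (A(X))_n = Σ_{ℓ < λ} (A'(X))_ℓ·X_{n-ℓ} + γ_{n,λ}(A,X) + δ_n(A,X) + ε_n(A,X). -/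

import Mathlib

/-- The "core" `(X^[j])_n`: the sum of `X_{k_1} ⋯ X_{k_j}` over tuples with
`k_1 + ⋯ + k_j = n` and every `k_i ≤ n/2`. -/
noncomputable def seriesCore {K : Type*} [Field K] (X : PowerSeries K) (j n : ℕ) : K :=
  ∑ f ∈ (Finset.Nat.antidiagonalTuple j n).filter (fun f => ∀ i, 2 * f i ≤ n),
    ∏ i, PowerSeries.coeff (R := K) (f i) X

/-- `δ_n(A, X) = ∑_{j ≤ m} (A_j · X^[j])_n`. -/
noncomputable def deltaTerm {K : Type*} [Field K] (A : Polynomial (PowerSeries K))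
    (X : PowerSeries K) (m n : ℕ) : K :=
  ∑ j ∈ Finset.range (m + 1),
    ∑ k ∈ Finset.range (n + 1),
      PowerSeries.coeff (R := K) k (A.coeff j) * seriesCore X j (n - k)

/-- `ε_n(A, X) = ∑_{j ≤ m} ∑_{k+p+q = n, q < p ≤ n/2} j (A_j)_k (X^{j-1})_q X_p`. -/
noncomputable def epsTerm {K : Type*} [Field K] (A : Polynomial (PowerSeries K))
    (X : PowerSeries K) (m n : ℕ) : K :=
  ∑ j ∈ Finset.range (m + 1),
    ∑ k ∈ Finset.range (n + 1), ∑ p ∈ Finset.range (n + 1),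
      if k + p ≤ n ∧ n - k - p < p ∧ 2 * p ≤ n then
        (j : K) * PowerSeries.coeff (R := K) k (A.coeff j)
          * PowerSeries.coeff (R := K) (n - k - p) (X ^ (j - 1)) * PowerSeries.coeff (R := K) p X
      else 0

/-- `γ_{n,λ}(A, X) = ∑_{λ ≤ ℓ < n/2} (A'(X))_ℓ X_{n-ℓ}`. -/
noncomputable def gammaTerm {K : Type*} [Field K] (A : Polynomial (PowerSeries K))
    (X : PowerSeries K) (n lam : ℕ) : K :=
  ∑ ℓ ∈ (Finset.range n).filter (fun ℓ => lam ≤ ℓ ∧ 2 * ℓ < n),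
    PowerSeries.coeff (R := K) ℓ (Polynomial.eval X (Polynomial.derivative A))
      * PowerSeries.coeff (R := K) (n - ℓ) X

/-!
Expand `A(X)_n = ∑_j ∑_k (A_j)_k (X^j)_{n-k}` and sort the tuples `(k_1, …, k_j)` contributing
to `(X^j)_M` by their entries: either all are `≤ M/2` (the core `X^[j]`), or exactly one entry
`p` exceeds `M/2`, since two such entries would already sum to more than `M`. The latter tuples
contribute `j · ∑_{p > M/2} (X^{j-1})_{M-p} X_p`. Summed against `(A_j)_k`, the terms with
`p ≤ n/2` form `ε_n`, while those with `p > n/2` recombine, through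
`A'(X) = ∑_j j A_j X^{j-1}`, into `∑_{ℓ < n/2} (A'(X))_ℓ X_{n-ℓ}`, which `λ` cuts into the
first sum and `γ_{n,λ}`.
-/

open Finset

namespace Finset

variable {M R : Type*} [AddCommMonoid M] [CommSemiring R]

/-- A triple `k + q + p = n` with `q < p` has either `p ≤ n/2`, or `p > n/2`, and then `q < p`
holds automatically. -/
theorem sum_sum_filter_lt_two_mul_eq (g : ℕ → ℕ → M) (n : ℕ) :
    ∑ k ∈ range (n + 1), ∑ p ∈ (range (n - k + 1)).filter (fun p => n - k < 2 * p), g k p =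
      ∑ k ∈ range (n + 1), ∑ p ∈ range (n + 1),
          (if k + p ≤ n ∧ n - k - p < p ∧ 2 * p ≤ n then g k p else 0) +
        ∑ p ∈ (range (n + 1)).filter (fun p => n < 2 * p), ∑ k ∈ range (n - p + 1), g k p := by
  set S := range (n + 1) ×ˢ range (n + 1)
  have hsmall : ∑ k ∈ range (n + 1), ∑ p ∈ (range (n - k + 1)).filter (fun p => n - k < 2 * p),
      g k p = ∑ x ∈ S.filter (fun x => x.1 + x.2 ≤ n ∧ n - x.1 < 2 * x.2), g x.1 x.2 :=
    (sum_finset_product' _ _ _ fun x => by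
      simp only [S, mem_filter, mem_product, mem_range]; omega).symm
  have hbig : ∑ p ∈ (range (n + 1)).filter (fun p => n < 2 * p), ∑ k ∈ range (n - p + 1), g k p =
      ∑ x ∈ S.filter (fun x => x.1 + x.2 ≤ n ∧ n < 2 * x.2), g x.1 x.2 :=
    (sum_finset_product_right' _ _ _ fun x => by
      simp only [S, mem_filter, mem_product, mem_range]; omega).symm
  rw [hsmall, hbig, ← sum_product', sum_filter, sum_filter, ← sum_add_distrib]
  refine sum_congr rfl fun x _ => ?_
  split_ifs <;> first | omega | simp

theorem sum_range_add_sum_filter_eq_sum_filter_lt_two_mul (g : ℕ → ℕ → M) {n lam : ℕ}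
    (h : 2 * lam ≤ n + 1) :
    ∑ ℓ ∈ range lam, g ℓ (n - ℓ) +
        ∑ ℓ ∈ (range n).filter (fun ℓ => lam ≤ ℓ ∧ 2 * ℓ < n), g ℓ (n - ℓ) =
      ∑ p ∈ (range (n + 1)).filter (fun p => n < 2 * p), g (n - p) p := by
  rw [← sum_union <| disjoint_left.2 fun ℓ h₁ h₂ => by
    simp only [mem_range, mem_filter] at h₁ h₂; omega]
  refine sum_nbij' (n - ·) (n - ·) ?_ ?_ ?_ ?_ fun ℓ hℓ => ?_
  iterate 4 intro x hx; simp only [mem_union, mem_filter, mem_range] at hx ⊢; omega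
  simp only [mem_union, mem_filter, mem_range] at hℓ
  rw [Nat.sub_sub_self (by omega)]

namespace Nat

theorem add_le_of_mem_antidiagonalTuple {k M : ℕ} {f : Fin k → ℕ}
    (hf : f ∈ antidiagonalTuple k M) {i i' : Fin k} (h : i ≠ i') : f i + f i' ≤ M := by
  rw [mem_antidiagonalTuple] at hf
  rw [← hf, ← sum_pair h]
  exact sum_le_sum_of_subset (subset_univ _)

theorem sum_prod_filter_antidiagonalTuple_succ {j M : ℕ} (i : Fin (j + 1)) (P : ℕ → Prop)
    [DecidablePred P] (F : ℕ → R) :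
    ∑ f ∈ (antidiagonalTuple (j + 1) M).filter (fun f => P (f i)), ∏ t, F (f t) =
      ∑ p ∈ (range (M + 1)).filter P, F p * ∑ g ∈ antidiagonalTuple j (M - p), ∏ t, F (g t) := by
  simp_rw [mul_sum]
  rw [sum_sigma']
  refine sum_nbij' (fun f => ⟨f i, i.removeNth f⟩) (fun x => i.insertNth x.1 x.2) ?_ ?_ ?_ ?_ ?_
  · intro f hf
    simp only [mem_filter, mem_antidiagonalTuple, Fin.sum_univ_succAbove f i] at hf
    simp only [mem_sigma, mem_filter, mem_range, mem_antidiagonalTuple, Fin.removeNth]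
    exact ⟨⟨by omega, hf.2⟩, by omega⟩
  · rintro ⟨p, g⟩ hx
    simp only [mem_sigma, mem_filter, mem_range, mem_antidiagonalTuple] at hx
    simp only [mem_filter, mem_antidiagonalTuple, Fin.sum_univ_succAbove _ i,
      Fin.insertNth_apply_same, Fin.insertNth_apply_succAbove]
    exact ⟨by omega, hx.1.2⟩
  · intro f _
    simp
  · rintro ⟨p, g⟩ _
    simp
  · intro f _
    exact Fin.prod_univ_succAbove (fun t => F (f t)) i

theorem sum_prod_antidiagonalTuple_succ (F : ℕ → R) (j M : ℕ) :
    ∑ f ∈ antidiagonalTuple (j + 1) M, ∏ t, F (f t) =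
      ∑ p ∈ range (M + 1), F p * ∑ g ∈ antidiagonalTuple j (M - p), ∏ t, F (g t) := by
  simpa using sum_prod_filter_antidiagonalTuple_succ (j := j) (M := M) 0 (fun _ => True) F

theorem sum_prod_antidiagonalTuple_succ_eq_core_add (F : ℕ → R) (j M : ℕ) :
    ∑ f ∈ antidiagonalTuple (j + 1) M, ∏ t, F (f t) =
      ∑ f ∈ (antidiagonalTuple (j + 1) M).filter (fun f => ∀ i, 2 * f i ≤ M), ∏ t, F (f t) +
        (j + 1) * ∑ p ∈ (range (M + 1)).filter (fun p => M < 2 * p),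
          F p * ∑ g ∈ antidiagonalTuple j (M - p), ∏ t, F (g t) := by
  rw [← sum_filter_add_sum_filter_not _ (fun f => ∀ i, 2 * f i ≤ M)]
  congr 1
  have hnot_core : (antidiagonalTuple (j + 1) M).filter (fun f => ¬ ∀ i, 2 * f i ≤ M) =
      univ.biUnion fun i => (antidiagonalTuple (j + 1) M).filter (fun f => M < 2 * f i) := by
    ext f
    simp [not_forall, not_le]
  have hdisj : (Set.univ : Set (Fin (j + 1))).PairwiseDisjoint
      fun i => (antidiagonalTuple (j + 1) M).filter (fun f => M < 2 * f i) := by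
    intro i _ i' _ h
    rw [Function.onFun, disjoint_filter]
    intro f hf hi hi'
    have := add_le_of_mem_antidiagonalTuple hf h
    omega
  rw [hnot_core, sum_biUnion (by simpa using hdisj),
    sum_congr rfl fun i _ => sum_prod_filter_antidiagonalTuple_succ i (fun p => M < 2 * p) F]
  simp

end Nat

end Finset

theorem Polynomial.derivative_eval_eq_sum_range' {R : Type*} [CommSemiring R] {p : Polynomial R}
    {n : ℕ} (hp : p.natDegree < n) (x : R) :
    (derivative p).eval x = ∑ j ∈ range n, p.coeff j * j * x ^ (j - 1) := by
  rw [derivative_eval, sum_over_range' _ (by simp) _ hp]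

namespace PowerSeries

section CommSemiring

variable {R : Type*} [CommSemiring R]

theorem coeff_mul_eq_sum_range (ψ χ : PowerSeries R) (N : ℕ) :
    coeff N (ψ * χ) = ∑ k ∈ range (N + 1), coeff k ψ * coeff (N - k) χ := by
  rw [coeff_mul, Nat.sum_antidiagonal_eq_sum_range_succ_mk]

theorem coeff_pow_eq_sum_antidiagonalTuple (φ : PowerSeries R) (j M : ℕ) :
    coeff M (φ ^ j) = ∑ f ∈ Nat.antidiagonalTuple j M, ∏ i, coeff (f i) φ := by
  induction j generalizing M with
  | zero => cases M <;> simp [Nat.antidiagonalTuple_zero_succ, coeff_one]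
  | succ j ih =>
    rw [Nat.sum_prod_antidiagonalTuple_succ (fun k => coeff k φ), pow_succ',
      coeff_mul_eq_sum_range]
    simp_rw [ih]

end CommSemiring

variable {K : Type*} [Field K]

theorem coeff_pow_eq_seriesCore_add (φ : PowerSeries K) (j M : ℕ) :
    coeff M (φ ^ j) = seriesCore φ j M +
      j * ∑ p ∈ (range (M + 1)).filter (fun p => M < 2 * p),
        coeff (M - p) (φ ^ (j - 1)) * coeff p φ := by
  cases j with
  | zero =>
    rw [coeff_pow_eq_sum_antidiagonalTuple, seriesCore, filter_true_of_mem fun f _ i => i.elim0]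
    simp
  | succ j =>
    rw [coeff_pow_eq_sum_antidiagonalTuple,
      Nat.sum_prod_antidiagonalTuple_succ_eq_core_add (fun k => coeff k φ)]
    simp [seriesCore, ← coeff_pow_eq_sum_antidiagonalTuple, mul_comm]

theorem coeff_mul_pow_eq_seriesCore_add (ψ φ : PowerSeries K) (j n : ℕ) :
    coeff n (ψ * φ ^ j) =
      ∑ k ∈ range (n + 1), coeff k ψ * seriesCore φ j (n - k) +
      ∑ k ∈ range (n + 1), ∑ p ∈ range (n + 1),
        (if k + p ≤ n ∧ n - k - p < p ∧ 2 * p ≤ n then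
          (j : K) * coeff k ψ * coeff (n - k - p) (φ ^ (j - 1)) * coeff p φ else 0) +
      ∑ p ∈ (range (n + 1)).filter (fun p => n < 2 * p),
        coeff (n - p) (ψ * (j : PowerSeries K) * φ ^ (j - 1)) * coeff p φ := by
  set g : ℕ → ℕ → K := fun k p =>
    (j : K) * coeff k ψ * coeff (n - k - p) (φ ^ (j - 1)) * coeff p φ
  have hbig (p : ℕ) : coeff (n - p) (ψ * (j : PowerSeries K) * φ ^ (j - 1)) * coeff p φ =
      ∑ k ∈ range (n - p + 1), g k p := by
    rw [← map_natCast (C (R := K)), mul_right_comm, coeff_mul_C, coeff_mul_eq_sum_range,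
      sum_mul, sum_mul]
    refine sum_congr rfl fun k _ => ?_
    rw [Nat.sub_right_comm]
    ring
  simp_rw [hbig]
  rw [coeff_mul_eq_sum_range]
  simp_rw [fun k => coeff_pow_eq_seriesCore_add φ j (n - k), mul_add, sum_add_distrib, add_assoc]
  congr 1
  rw [← sum_sum_filter_lt_two_mul_eq]
  refine sum_congr rfl fun k _ => ?_
  rw [mul_sum, mul_sum]
  refine sum_congr rfl fun p _ => ?_
  ring

end PowerSeries

theorem fast_growing_series_stmt7 {K : Type*} [Field K]
    (A : Polynomial (PowerSeries K)) (X : PowerSeries K) (m : ℕ) (hm : A.natDegree ≤ m)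
    (n lam : ℕ) (hlam : 2 * lam < n) :
    PowerSeries.coeff (R := K) n (Polynomial.eval X A) =
      (∑ ℓ ∈ Finset.range lam,
        PowerSeries.coeff (R := K) ℓ (Polynomial.eval X (Polynomial.derivative A))
          * PowerSeries.coeff (R := K) (n - ℓ) X)
      + gammaTerm A X n lam + deltaTerm A X m n + epsTerm A X m n := by
  have hA : A.natDegree < m + 1 := Nat.lt_succ_of_le hm
  have hgamma : ∑ j ∈ range (m + 1), ∑ p ∈ (range (n + 1)).filter (fun p => n < 2 * p),
      PowerSeries.coeff (n - p) (A.coeff j * (j : PowerSeries K) * X ^ (j - 1)) *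
        PowerSeries.coeff p X =
      ∑ p ∈ (range (n + 1)).filter (fun p => n < 2 * p),
        PowerSeries.coeff (n - p) (Polynomial.eval X (Polynomial.derivative A)) *
          PowerSeries.coeff p X := by
    rw [Polynomial.derivative_eval_eq_sum_range' hA, sum_comm]
    simp only [map_sum, sum_mul]
  rw [gammaTerm, sum_range_add_sum_filter_eq_sum_filter_lt_two_mul
      (fun ℓ q => PowerSeries.coeff ℓ (Polynomial.eval X (Polynomial.derivative A)) *
        PowerSeries.coeff q X) (by omega),
    Polynomial.eval_eq_sum_range' hA, map_sum,
    sum_congr rfl fun j _ => PowerSeries.coeff_mul_pow_eq_seriesCore_add (A.coeff j) X j n]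
  simp only [sum_add_distrib]
  rw [hgamma, deltaTerm, epsTerm]
  abel
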